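/- (Differentiability of the principal part, special case) Let G : ℝ^N → ℝ be an admissible G-function that is additionally continuously differentiable, with gradient ∇G, and let I ⊂ ℝ be a bounded nondegenerate interval. Let v, w ∈ L^G(I,ℝ^N). Then for every s ∈ ℝ the integral ∫_I G(v(t) + s·w(t)) dt is finite, the function t ↦ ⟨∇G(v(t)), w(t)⟩ is integrable on I, and the map ψ : ℝ → ℝ, ψ(s) = ∫_I G(v(t) + s·w(t)) dt, is differentiable at s = 0 with ψ'(0) = ∫_I ⟨∇G(v(t)), w(t)⟩ dt. (Applied with v = u̇ and w = φ̇ this gives the directional derivative of the action functional I(u) = ∫_I G(u̇) dt on the Orlicz–Sobolev space in the direction φ.) -/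

import Mathlib

open MeasureTheory Filter Set

noncomputable section

abbrev Euc (N : ℕ) := EuclideanSpace ℝ (Fin N)

/-- Admissible G-function: (G1)-(G6). -/
def IsGFunction {N : ℕ} (G : Euc N → ℝ) : Prop :=
  G 0 = 0 ∧
  ConvexOn ℝ Set.univ G ∧
  (∀ x, G (-x) = G x) ∧
  (∀ C : ℝ, ∃ R : ℝ, ∀ x : Euc N, R ≤ ‖x‖ → C * ‖x‖ ≤ G x) ∧
  (∃ K₁ : ℝ, 2 ≤ K₁ ∧ ∃ M₁ : ℝ, 0 < M₁ ∧ ∀ x : Euc N, M₁ ≤ ‖x‖ → G ((2:ℝ) • x) ≤ K₁ * G x) ∧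
  (∃ K₂ : ℝ, 1 ≤ K₂ ∧ ∃ M₂ : ℝ, 0 < M₂ ∧ ∀ x : Euc N, M₂ ≤ ‖x‖ → G x ≤ (1/(2*K₂)) * G (K₂ • x))

/-- Membership in the anisotropic Orlicz space L^G(I, ℝ^N). -/
def MemLG {N : ℕ} (G : Euc N → ℝ) (I : Set ℝ) (u : ℝ → Euc N) : Prop :=
  AEStronglyMeasurable u (volume.restrict I) ∧ IntegrableOn (fun t => G (u t)) I

/-- Luxemburg norm. -/
def luxNorm {N : ℕ} (G : Euc N → ℝ) (I : Set ℝ) (u : ℝ → Euc N) : ℝ :=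
  sInf {α : ℝ | 0 < α ∧ (∫ t in I, G (α⁻¹ • u t)) ≤ 1}

/-- Modular. -/
def modular {N : ℕ} (G : Euc N → ℝ) (I : Set ℝ) (u : ℝ → Euc N) : ℝ :=
  ∫ t in I, G (u t)

/-- Fenchel conjugate. -/
def fenchelConj {N : ℕ} (G : Euc N → ℝ) (y : Euc N) : ℝ :=
  ⨆ x : Euc N, ((inner ℝ x y : ℝ) - G x)


/-!
Convexity, evenness and `G 0 = 0` make `G` nonnegative, and compactness of balls upgrades Δ₂ at
infinity to `G (2 • x) ≤ K * G x + C` everywhere. On a set of finite measure this makes the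
Orlicz class a vector space, so every `G (v + s • w)` is integrable. Along each line
`r ↦ G (v t + r • w t)` convexity squeezes the derivative at `|s| < 1` between unit-step slopes,
hence bounds it by `max (G (v t - 2 • w t)) (G (v t + 2 • w t))`, which is integrable, and
differentiation under the integral sign applies.
-/

section

variable {E : Type*} [AddCommGroup E] [Module ℝ E] {f : E → ℝ}

lemma ConvexOn.nonneg_of_even (hf : ConvexOn ℝ univ f) (h0 : f 0 = 0)
    (heven : ∀ x, f (-x) = f x) (x : E) : 0 ≤ f x := by
  have h := hf.2 (mem_univ x) (mem_univ (-x)) (by norm_num : (0 : ℝ) ≤ 1 / 2)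
    (by norm_num : (0 : ℝ) ≤ 1 / 2) (by norm_num)
  rw [← smul_add, add_neg_cancel, smul_zero, h0, heven] at h
  simp only [smul_eq_mul] at h
  linarith

lemma ConvexOn.comp_add_smul (hf : ConvexOn ℝ univ f) (x y : E) :
    ConvexOn ℝ univ fun r : ℝ => f (x + r • y) := by
  have h := hf.comp_affineMap (AffineMap.lineMap x (x + y) : ℝ →ᵃ[ℝ] E)
  have hline : f ∘ (AffineMap.lineMap x (x + y) : ℝ →ᵃ[ℝ] E) = fun r : ℝ => f (x + r • y) := by
    funext r
    simp only [Function.comp_apply, AffineMap.lineMap_apply_module]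
    congr 1
    module
  rwa [hline, preimage_univ] at h

lemma ConvexOn.map_smul_le_of_abs_le (hf : ConvexOn ℝ univ f) (heven : ∀ x, f (-x) = f x)
    {r c : ℝ} (hrc : |r| ≤ c) (y : E) : f (r • y) ≤ f (c • y) := by
  have h := (hf.comp_add_smul 0 y).le_max_of_mem_Icc (mem_univ (-c)) (mem_univ c) (abs_le.mp hrc)
  simpa only [zero_add, neg_smul, heven, max_self] using h

lemma exists_map_two_pow_smul_le {K C : ℝ} (hK : 0 ≤ K)
    (hdouble : ∀ x, f ((2 : ℝ) • x) ≤ K * f x + C) (n : ℕ) :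
    ∃ A B : ℝ, ∀ x, f ((2 : ℝ) ^ n • x) ≤ A * f x + B := by
  induction n with
  | zero => exact ⟨1, 0, fun x => by simp⟩
  | succ n ih =>
    obtain ⟨A, B, hAB⟩ := ih
    refine ⟨K * A, K * B + C, fun x => ?_⟩
    calc f ((2 : ℝ) ^ (n + 1) • x) = f ((2 : ℝ) • (2 : ℝ) ^ n • x) := by
          rw [smul_smul, pow_succ']
      _ ≤ K * f ((2 : ℝ) ^ n • x) + C := hdouble _
      _ ≤ K * (A * f x + B) + C := by gcongr; exact hAB x
      _ = K * A * f x + (K * B + C) := by ring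

end

lemma exists_map_two_smul_le_add_const {E : Type*} [NormedAddCommGroup E] [NormedSpace ℝ E]
    [ProperSpace E] {f : E → ℝ} (hf : Continuous f) (hf0 : ∀ x, 0 ≤ f x) {K M : ℝ} (hK : 0 ≤ K)
    (hdouble : ∀ x, M ≤ ‖x‖ → f ((2 : ℝ) • x) ≤ K * f x) :
    ∃ C, ∀ x, f ((2 : ℝ) • x) ≤ K * f x + C := by
  obtain ⟨C, hC⟩ := (isCompact_closedBall (0 : E) (2 * M)).bddAbove_image hf.continuousOn
  refine ⟨max C 0, fun x => ?_⟩
  rcases le_or_gt M ‖x‖ with hx | hx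
  · linarith [hdouble x hx, le_max_right C 0]
  · have h2x : (2 : ℝ) • x ∈ Metric.closedBall (0 : E) (2 * M) := by
      rw [mem_closedBall_zero_iff, norm_smul, Real.norm_two]
      linarith
    linarith [hC ⟨_, h2x, rfl⟩, mul_nonneg hK (hf0 x), le_max_left C 0]

namespace IsGFunction

variable {N : ℕ} {G : Euc N → ℝ}

lemma nonneg (hG : IsGFunction G) (x : Euc N) : 0 ≤ G x := by
  obtain ⟨h0, hconv, heven, -⟩ := hG
  exact hconv.nonneg_of_even h0 heven x

lemma continuous (hG : IsGFunction G) : Continuous G := by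
  obtain ⟨-, hconv, -⟩ := hG
  exact continuousOn_univ.mp (hconv.continuousOn isOpen_univ)

lemma exists_map_two_smul_le (hG : IsGFunction G) :
    ∃ K C : ℝ, 0 ≤ K ∧ ∀ x, G ((2 : ℝ) • x) ≤ K * G x + C := by
  have ⟨_, _, _, _, ⟨K, hK, M, _, hdouble⟩, _⟩ := hG
  obtain ⟨C, hC⟩ := exists_map_two_smul_le_add_const hG.continuous hG.nonneg (by linarith) hdouble
  exact ⟨K, C, by linarith, hC⟩

lemma exists_map_smul_le (hG : IsGFunction G) (s : ℝ) :
    ∃ A B : ℝ, ∀ x, G (s • x) ≤ A * G x + B := by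
  obtain ⟨K, C, hK, hdouble⟩ := hG.exists_map_two_smul_le
  obtain ⟨n, hn⟩ := pow_unbounded_of_one_lt |s| (by norm_num : (1 : ℝ) < 2)
  obtain ⟨A, B, hAB⟩ := exists_map_two_pow_smul_le hK hdouble n
  obtain ⟨-, hconv, heven, -⟩ := hG
  exact ⟨A, B, fun x => (hconv.map_smul_le_of_abs_le heven hn.le x).trans (hAB x)⟩

lemma exists_map_add_le (hG : IsGFunction G) :
    ∃ K C : ℝ, ∀ x y, G (x + y) ≤ K * (G x + G y) + C := by
  obtain ⟨K, C, hK, hdouble⟩ := hG.exists_map_two_smul_le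
  refine ⟨K / 2, C, fun x y => ?_⟩
  obtain ⟨-, hconv, -⟩ := hG
  have hmid := hconv.2 (mem_univ x) (mem_univ y) (by norm_num : (0 : ℝ) ≤ 1 / 2)
    (by norm_num : (0 : ℝ) ≤ 1 / 2) (by norm_num)
  simp only [smul_eq_mul] at hmid
  calc G (x + y) = G ((2 : ℝ) • ((1 / 2 : ℝ) • x + (1 / 2 : ℝ) • y)) := by congr 1; module
    _ ≤ K * G ((1 / 2 : ℝ) • x + (1 / 2 : ℝ) • y) + C := hdouble _
    _ ≤ K * (1 / 2 * G x + 1 / 2 * G y) + C := by gcongr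
    _ = K / 2 * (G x + G y) + C := by ring

end IsGFunction

namespace MemLG

variable {N : ℕ} {G : Euc N → ℝ} {I : Set ℝ} {u w : ℝ → Euc N}

lemma of_le (hG : IsGFunction G) (hu : AEStronglyMeasurable u (volume.restrict I))
    {g : ℝ → ℝ} (hg : IntegrableOn g I) (hle : ∀ t, G (u t) ≤ g t) : MemLG G I u :=
  ⟨hu, hg.mono' (hG.continuous.comp_aestronglyMeasurable hu)
    (ae_of_all _ fun t => (Real.norm_of_nonneg (hG.nonneg _)).trans_le (hle t))⟩

lemma const_smul (hG : IsGFunction G) (hI : volume I ≠ ⊤) (hu : MemLG G I u) (s : ℝ) :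
    MemLG G I (fun t => s • u t) := by
  obtain ⟨A, B, hAB⟩ := hG.exists_map_smul_le s
  exact of_le hG (hu.1.const_smul s) ((hu.2.const_mul A).add (integrableOn_const hI))
    fun t => hAB (u t)

lemma add (hG : IsGFunction G) (hI : volume I ≠ ⊤) (hu : MemLG G I u) (hw : MemLG G I w) :
    MemLG G I (fun t => u t + w t) := by
  obtain ⟨K, C, hKC⟩ := hG.exists_map_add_le
  exact of_le hG (hu.1.add hw.1) (((hu.2.add hw.2).const_mul K).add (integrableOn_const hI))
    fun t => hKC (u t) (w t)

end MemLG

lemma HasGradientAt.hasDerivAt_add_smul {E : Type*} [NormedAddCommGroup E]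
    [InnerProductSpace ℝ E] [CompleteSpace E] {f : E → ℝ} {g x y : E} {s : ℝ}
    (hf : HasGradientAt f g (x + s • y)) :
    HasDerivAt (fun r : ℝ => f (x + r • y)) (inner ℝ g y) s := by
  have hline : HasDerivAt (fun r : ℝ => x + r • y) y s := by
    simpa using ((hasDerivAt_id s).smul_const y).const_add x
  have h := hf.hasFDerivAt.comp_hasDerivAt s hline
  simp only [InnerProductSpace.toDual_apply_apply] at h
  exact h

lemma ConvexOn.abs_le_max_of_hasDerivAt {φ : ℝ → ℝ} (hφ : ConvexOn ℝ univ φ)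
    (hφ0 : ∀ r, 0 ≤ φ r) {s c φ' : ℝ} (hsc : |s| + 1 ≤ c) (hd : HasDerivAt φ φ' s) :
    |φ'| ≤ max (φ (-c)) (φ c) := by
  have hs := abs_le.mp (show |s| ≤ c - 1 by linarith)
  have hmax : ∀ r ∈ Icc (-c) c, φ r ≤ max (φ (-c)) (φ c) := fun r hr =>
    hφ.le_max_of_mem_Icc (mem_univ _) (mem_univ _) hr
  have hright := hφ.le_slope_of_hasDerivAt (mem_univ s) (mem_univ (s + 1)) (by linarith) hd
  have hleft := hφ.slope_le_of_hasDerivAt (mem_univ (s - 1)) (mem_univ s) (by linarith) hd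
  simp only [slope_def_field, add_sub_cancel_left, sub_sub_cancel, div_one] at hright hleft
  rw [abs_le]
  constructor
  · linarith [hmax (s - 1) ⟨by linarith, by linarith⟩, hφ0 s]
  · linarith [hmax (s + 1) ⟨by linarith, by linarith⟩, hφ0 s]

theorem ConvexOn.hasDerivAt_integral_add_smul {α : Type*} [MeasurableSpace α] {μ : Measure α}
    {E : Type*} [NormedAddCommGroup E] [InnerProductSpace ℝ E] [CompleteSpace E]
    [MeasurableSpace E] [BorelSpace E] [SecondCountableTopology E]
    {f : E → ℝ} {f' : E → E} (hf : ConvexOn ℝ univ f) (hf0 : ∀ x, 0 ≤ f x)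
    (hf' : ∀ x, HasGradientAt f (f' x) x) {u w : α → E}
    (hu : AEStronglyMeasurable u μ) (hw : AEStronglyMeasurable w μ)
    (hint : ∀ s : ℝ, Integrable (fun t => f (u t + s • w t)) μ) :
    Integrable (fun t => inner ℝ (f' (u t)) (w t)) μ ∧
      HasDerivAt (fun s : ℝ => ∫ t, f (u t + s • w t) ∂μ) (∫ t, inner ℝ (f' (u t)) (w t) ∂μ) 0 := by
  have hf'_eq : f' = gradient f := funext fun x => (hf' x).gradient.symm
  have hf'_meas : Measurable f' := hf'_eq ▸
    (InnerProductSpace.toDual ℝ E).symm.continuous.measurable.comp (measurable_fderiv ℝ f)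
  have hderiv : ∀ t, ∀ s : ℝ, HasDerivAt (fun r : ℝ => f (u t + r • w t))
      (inner ℝ (f' (u t + s • w t)) (w t)) s := fun t s =>
    (hf' _).hasDerivAt_add_smul
  have hbound : ∀ t, ∀ s ∈ Metric.ball (0 : ℝ) 1,
      ‖inner ℝ (f' (u t + s • w t)) (w t)‖ ≤
        max (f (u t + (-2 : ℝ) • w t)) (f (u t + (2 : ℝ) • w t)) := fun t s hs => by
    rw [mem_ball_zero_iff, Real.norm_eq_abs] at hs
    exact (hf.comp_add_smul (u t) (w t)).abs_le_max_of_hasDerivAt (fun _ => hf0 _)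
      (by linarith) (hderiv t s)
  have h := hasDerivAt_integral_of_dominated_loc_of_deriv_le (μ := μ) (x₀ := 0)
    (F := fun s t => f (u t + s • w t)) (Metric.ball_mem_nhds 0 one_pos)
    (Eventually.of_forall fun s => (hint s).aestronglyMeasurable) (hint 0)
    ((hf'_meas.comp_aemeasurable (hu.add (hw.const_smul 0)).aemeasurable
      ).aestronglyMeasurable.inner hw)
    (ae_of_all _ hbound) ((hint (-2)).sup (hint 2)) (ae_of_all _ fun t s _ => hderiv t s)
  simpa only [zero_smul, add_zero] using h

theorem principal_part_special_case_general {N : ℕ} (G : Euc N → ℝ)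
    (hG : IsGFunction G) (G' : Euc N → Euc N)
    (hG' : ∀ x, HasGradientAt G (G' x) x)
    (I : Set ℝ) (a b : ℝ) (hI2 : I ⊆ Icc a b)
    (v w : ℝ → Euc N) (hv : MemLG G I v) (hw : MemLG G I w) :
    (∀ s : ℝ, IntegrableOn (fun t => G (v t + s • w t)) I) ∧
    IntegrableOn (fun t => (inner ℝ (G' (v t)) (w t) : ℝ)) I ∧
    HasDerivAt (fun s : ℝ => ∫ t in I, G (v t + s • w t))
      (∫ t in I, (inner ℝ (G' (v t)) (w t) : ℝ)) 0 := by
  have hI : volume I ≠ ⊤ := ((measure_mono hI2).trans_lt measure_Icc_lt_top).ne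
  have hint : ∀ s : ℝ, IntegrableOn (fun t => G (v t + s • w t)) I := fun s =>
    (hv.add hG hI (hw.const_smul hG hI s)).2
  have ⟨_, hconv, _⟩ := hG
  exact ⟨hint, hconv.hasDerivAt_integral_add_smul hG.nonneg hG' hv.1 hw.1 hint⟩

/-- Differentiability of the principal part in the special case
F(t,x,v) = G(v): finiteness of the integrals, integrability of the derivative
integrand, and the directional derivative formula at s = 0. -/
theorem principal_part_special_case {N : ℕ} (hN : 1 ≤ N) (G : Euc N → ℝ)
    (hG : IsGFunction G) (G' : Euc N → Euc N)
    (hG' : ∀ x, HasGradientAt G (G' x) x) (hG'cont : Continuous G')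
    (I : Set ℝ) (a b : ℝ) (hab : a < b) (hI1 : Ioo a b ⊆ I) (hI2 : I ⊆ Icc a b)
    (v w : ℝ → Euc N) (hv : MemLG G I v) (hw : MemLG G I w) :
    (∀ s : ℝ, IntegrableOn (fun t => G (v t + s • w t)) I) ∧
    IntegrableOn (fun t => (inner ℝ (G' (v t)) (w t) : ℝ)) I ∧
    HasDerivAt (fun s : ℝ => ∫ t in I, G (v t + s • w t))
      (∫ t in I, (inner ℝ (G' (v t)) (w t) : ℝ)) 0 :=
  principal_part_special_case_general G hG G' hG' I a b hI2 v w hv hw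

end
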